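/- arXiv:math/9911211 — 7 statements merged into one kernel-verified Lean document; each statement's English description precedes it below -/
import Mathlib

section
/- The sum of two reachability submodules of R^n is again a reachability submodule. -/
open Matrix

variable {R : Type*} [CommRing R] {n m : ℕ}

/-- `U` is `(A,B)`-invariant: `A·U ⊆ U + im B`. -/
def ABInvariant (A : Matrix (Fin n) (Fin n) R) (B : Matrix (Fin n) (Fin m) R)
    (U : Submodule R (Fin n → R)) : Prop :=
  ∀ x ∈ U, A.mulVec x ∈ U ⊔ LinearMap.range B.mulVecLin

/-- `x` is reached from `0` at time `r` by a trajectory staying in `U`. -/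
def ABReached (A : Matrix (Fin n) (Fin n) R) (B : Matrix (Fin n) (Fin m) R)
    (U : Submodule R (Fin n → R)) (x : Fin n → R) (r : ℕ) : Prop :=
  ∃ (u : ℕ → Fin m → R) (xs : ℕ → Fin n → R),
    xs 0 = 0 ∧ (∀ k, xs (k + 1) = A.mulVec (xs k) + B.mulVec (u k)) ∧
    (∀ k, 1 ≤ k → k ≤ r → xs k ∈ U) ∧ xs r = x

/-- `U` is a reachability submodule. -/
def ABReachability (A : Matrix (Fin n) (Fin n) R) (B : Matrix (Fin n) (Fin m) R)
    (U : Submodule R (Fin n → R)) : Prop :=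
  ABInvariant A B U ∧ ∀ x ∈ U, ∃ r, ABReached A B U x r

lemma ABReached.pad {A : Matrix (Fin n) (Fin n) R} {B : Matrix (Fin n) (Fin m) R}
    {U : Submodule R (Fin n → R)} {x : Fin n → R} {r : ℕ}
    (h : ABReached A B U x r) (d : ℕ) : ABReached A B U x (d + r) := by
  obtain ⟨u, xs, h0, hrec, hmem, hend⟩ := h
  refine ⟨fun k => if k < d then 0 else u (k - d), fun k => xs (k - d), ?_, ?_, ?_, ?_⟩
  · simp [h0]
  · intro k
    by_cases hk : k < d
    · have h1 : k + 1 - d = 0 := by omega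
      have h2 : k - d = 0 := by omega
      simp [h1, h2, h0, hk, Matrix.mulVec_zero]
    · have h1 : k + 1 - d = (k - d) + 1 := by omega
      simp [h1, hrec, hk]
  · intro k hk1 hk2
    by_cases hk : k ≤ d
    · have : k - d = 0 := by omega
      simp [this, h0]
    · exact hmem _ (by omega) (by omega)
  · have : d + r - d = r := by omega
    simp [this, hend]

lemma ABReached.add {A : Matrix (Fin n) (Fin n) R} {B : Matrix (Fin n) (Fin m) R}
    {U V : Submodule R (Fin n → R)} {x y : Fin n → R} {r : ℕ}
    (hx : ABReached A B U x r) (hy : ABReached A B V y r) :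
    ABReached A B (U ⊔ V) (x + y) r := by
  obtain ⟨u, xs, h0, hrec, hmem, hend⟩ := hx
  obtain ⟨v, ys, h0', hrec', hmem', hend'⟩ := hy
  refine ⟨fun k => u k + v k, fun k => xs k + ys k, by simp [h0, h0'], ?_, ?_, by
    simp [hend, hend']⟩
  · intro k
    simp only [hrec, hrec', Matrix.mulVec_add]
    abel
  · intro k hk1 hk2
    exact Submodule.add_mem _ (Submodule.mem_sup_left (hmem k hk1 hk2))
      (Submodule.mem_sup_right (hmem' k hk1 hk2))

theorem stmt_2 (A : Matrix (Fin n) (Fin n) R) (B : Matrix (Fin n) (Fin m) R)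
    (U V : Submodule R (Fin n → R))
    (hU : ABReachability A B U) (hV : ABReachability A B V) :
    ABReachability A B (U ⊔ V) := by
  obtain ⟨hUinv, hUreach⟩ := hU
  obtain ⟨hVinv, hVreach⟩ := hV
  constructor
  · intro x hx
    rw [Submodule.mem_sup] at hx
    obtain ⟨a, ha, b, hb, rfl⟩ := hx
    rw [Matrix.mulVec_add]
    have hle1 : U ⊔ LinearMap.range B.mulVecLin ≤ (U ⊔ V) ⊔ LinearMap.range B.mulVecLin :=
      sup_le_sup_right le_sup_left _
    have hle2 : V ⊔ LinearMap.range B.mulVecLin ≤ (U ⊔ V) ⊔ LinearMap.range B.mulVecLin :=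
      sup_le_sup_right le_sup_right _
    exact Submodule.add_mem _ (hle1 (hUinv a ha)) (hle2 (hVinv b hb))
  · intro x hx
    rw [Submodule.mem_sup] at hx
    obtain ⟨a, ha, b, hb, rfl⟩ := hx
    obtain ⟨r, hr⟩ := hUreach a ha
    obtain ⟨s, hs⟩ := hVreach b hb
    have hr' : ABReached A B U a (s + r) := hr.pad s
    have hs' : ABReached A B V b (s + r) := by
      have := hs.pad r
      rwa [Nat.add_comm] at this
    exact ⟨s + r, hr'.add hs'⟩
end

section
/- If R is Noetherian, then any submodule M of R^n contains a unique maximal (A,B)-invariant submodule M*, i.e., an (A,B)-invariant submodule of M containing every (A,B)-invariant submodule of M. -/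
open Matrix

variable {R : Type*} [CommRing R] {n m : ℕ}

theorem Submodule.map_sSup_le_sSup_sup {R M : Type*} [Semiring R] [AddCommMonoid M]
    [Module R M] (f : M →ₗ[R] M) (W : Submodule R M) (S : Set (Submodule R M))
    (hS : ∀ U ∈ S, U.map f ≤ U ⊔ W) : (sSup S).map f ≤ sSup S ⊔ W := by
  refine Submodule.map_le_iff_le_comap.mpr (sSup_le fun U hU => ?_)
  exact Submodule.map_le_iff_le_comap.mp <|
    (hS U hU).trans (sup_le_sup_right (le_sSup hU) W)

theorem abInvariant_iff_map_le (A : Matrix (Fin n) (Fin n) R) (B : Matrix (Fin n) (Fin m) R)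
    (U : Submodule R (Fin n → R)) :
    ABInvariant A B U ↔ U.map A.mulVecLin ≤ U ⊔ LinearMap.range B.mulVecLin := by
  rw [Submodule.map_le_iff_le_comap]
  rfl

theorem ABInvariant.sSup {A : Matrix (Fin n) (Fin n) R} {B : Matrix (Fin n) (Fin m) R}
    {S : Set (Submodule R (Fin n → R))} (hS : ∀ U ∈ S, ABInvariant A B U) :
    ABInvariant A B (sSup S) := by
  simp only [abInvariant_iff_map_le] at hS ⊢
  exact Submodule.map_sSup_le_sSup_sup _ _ S hS

theorem stmt_3_general (A : Matrix (Fin n) (Fin n) R)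
    (B : Matrix (Fin n) (Fin m) R) (M : Submodule R (Fin n → R)) :
    ∃! Mstar : Submodule R (Fin n → R),
      ABInvariant A B Mstar ∧ Mstar ≤ M ∧
      ∀ U : Submodule R (Fin n → R), ABInvariant A B U → U ≤ M → U ≤ Mstar := by
  set S := {U : Submodule R (Fin n → R) | ABInvariant A B U ∧ U ≤ M}
  have hgreatest : IsGreatest S (sSup S) :=
    ⟨⟨ABInvariant.sSup fun _ hU => hU.1, sSup_le fun _ hU => hU.2⟩, fun _ hU => le_sSup hU⟩
  refine ⟨sSup S, ⟨hgreatest.1.1, hgreatest.1.2, fun U hU hUM => hgreatest.2 ⟨hU, hUM⟩⟩, ?_⟩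
  rintro V ⟨hV, hVM, hVmax⟩
  exact IsGreatest.unique (s := S) ⟨⟨hV, hVM⟩, fun U hU => hVmax U hU.1 hU.2⟩ hgreatest

theorem stmt_3 [IsNoetherianRing R] (A : Matrix (Fin n) (Fin n) R)
    (B : Matrix (Fin n) (Fin m) R) (M : Submodule R (Fin n → R)) :
    ∃! Mstar : Submodule R (Fin n → R),
      ABInvariant A B Mstar ∧ Mstar ≤ M ∧
      ∀ U : Submodule R (Fin n → R), ABInvariant A B U → U ≤ M → U ≤ Mstar :=
  stmt_3_general A B M
end

section
/- Every (A,B)-cyclic submodule of R^n is a reachability submodule (over any commutative ring R). -/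
open Matrix

variable {R : Type*} [CommRing R] {n m : ℕ}

lemma ABReached_zero (A : Matrix (Fin n) (Fin n) R) (B : Matrix (Fin n) (Fin m) R)
    (U : Submodule R (Fin n → R)) : ABReached A B U 0 0 :=
  ⟨0, 0, rfl, fun k => by simp [Matrix.mulVec_zero], fun k h1 h2 => by omega, rfl⟩

lemma ABReached_smul (A : Matrix (Fin n) (Fin n) R) (B : Matrix (Fin n) (Fin m) R)
    (U : Submodule R (Fin n → R)) {x : Fin n → R} {r : ℕ} (c : R)
    (hx : ABReached A B U x r) : ABReached A B U (c • x) r := by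
  obtain ⟨u, ys, h0, hrec, hmem, hr⟩ := hx
  refine ⟨fun k => c • u k, fun k => c • ys k, by simp [h0], fun k => ?_,
    fun k h1 h2 => U.smul_mem c (hmem k h1 h2), by simp [hr]⟩
  simp [hrec, Matrix.mulVec_smul, smul_add]

lemma ABReached_add (A : Matrix (Fin n) (Fin n) R) (B : Matrix (Fin n) (Fin m) R)
    (U : Submodule R (Fin n → R)) {x y : Fin n → R} {r : ℕ}
    (hx : ABReached A B U x r) (hy : ABReached A B U y r) :
    ABReached A B U (x + y) r := by
  obtain ⟨u, ys, h0, hrec, hmem, hr⟩ := hx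
  obtain ⟨u', ys', h0', hrec', hmem', hr'⟩ := hy
  refine ⟨fun k => u k + u' k, fun k => ys k + ys' k, by simp [h0, h0'], fun k => ?_,
    fun k h1 h2 => U.add_mem (hmem k h1 h2) (hmem' k h1 h2), by simp [hr, hr']⟩
  simp [hrec, hrec', Matrix.mulVec_add]
  abel

lemma ABReached_succ (A : Matrix (Fin n) (Fin n) R) (B : Matrix (Fin n) (Fin m) R)
    (U : Submodule R (Fin n → R)) {x : Fin n → R} {r : ℕ}
    (hx : ABReached A B U x r) : ABReached A B U x (r + 1) := by
  obtain ⟨u, ys, h0, hrec, hmem, hr⟩ := hx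
  refine ⟨fun k => if k = 0 then 0 else u (k - 1),
    fun k => if k = 0 then 0 else ys (k - 1), by simp, fun k => ?_, fun k h1 h2 => ?_,
    by simp [hr]⟩
  · cases k with
    | zero => simp [h0, Matrix.mulVec_zero]
    | succ j => simp [hrec j]
  · have hk : k ≠ 0 := by omega
    simp only [hk, if_false]
    rcases Nat.eq_or_lt_of_le h1 with h | h
    · simp [← h, h0]
    · exact hmem (k - 1) (by omega) (by omega)

lemma ABReached_mono (A : Matrix (Fin n) (Fin n) R) (B : Matrix (Fin n) (Fin m) R)
    (U : Submodule R (Fin n → R)) {x : Fin n → R} {r s : ℕ} (hrs : r ≤ s)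
    (hx : ABReached A B U x r) : ABReached A B U x s := by
  induction s, hrs using Nat.le_induction with
  | base => exact hx
  | succ s _ ih => exact ABReached_succ A B U ih

theorem stmt_8 (A : Matrix (Fin n) (Fin n) R) (B : Matrix (Fin n) (Fin m) R)
    (U : Submodule R (Fin n → R))
    (hcyc : ∃ (u : ℕ → Fin m → R) (xs : ℕ → Fin n → R),
      xs 0 = 0 ∧ (∀ k, xs (k + 1) = A.mulVec (xs k) + B.mulVec (u k)) ∧
      U = Submodule.span R (Set.range xs)) :
    ABReachability A B U := by
  obtain ⟨u, xs, h0, hrec, hU⟩ := hcyc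
  have hmem : ∀ k, xs k ∈ U := fun k => hU ▸ Submodule.subset_span ⟨k, rfl⟩
  constructor
  · intro x hx
    have hx' : x ∈ Submodule.span R (Set.range xs) := hU ▸ hx
    clear hx
    induction hx' using Submodule.span_induction with
    | mem y hy =>
      obtain ⟨k, rfl⟩ := hy
      have : A.mulVec (xs k) = xs (k + 1) - B.mulVec (u k) := by
        rw [hrec k]; abel
      rw [this]
      exact sub_mem (Submodule.mem_sup_left (hmem (k + 1)))
        (Submodule.mem_sup_right ⟨u k, rfl⟩)
    | zero => simp [Matrix.mulVec_zero]
    | add y z _ _ hy hz =>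
      rw [Matrix.mulVec_add]
      exact add_mem hy hz
    | smul c y _ hy =>
      rw [Matrix.mulVec_smul]
      exact Submodule.smul_mem _ c hy
  · intro x hx
    have hx' : x ∈ Submodule.span R (Set.range xs) := hU ▸ hx
    clear hx
    induction hx' using Submodule.span_induction with
    | mem y hy =>
      obtain ⟨k, rfl⟩ := hy
      exact ⟨k, u, xs, h0, hrec, fun j _ _ => hmem j, rfl⟩
    | zero => exact ⟨0, ABReached_zero A B U⟩
    | add y z _ _ hy hz =>
      obtain ⟨r, hr⟩ := hy
      obtain ⟨s, hs⟩ := hz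
      exact ⟨max r s, ABReached_add A B U
        (ABReached_mono A B U (le_max_left r s) hr)
        (ABReached_mono A B U (le_max_right r s) hs)⟩
    | smul c y _ hy =>
      obtain ⟨r, hr⟩ := hy
      exact ⟨r, ABReached_smul A B U c hr⟩
end

section
/- If (yE - A)f = Bg for polynomial vectors f ∈ R[y]^n and g ∈ R[y]^m, then the submodule of R^n generated by the coefficient vectors of f is a finite (A,B)-cyclic submodule: writing f = x_1 y^{d-1} + ... + x_d, there exist inputs u_0,...,u_d ∈ R^m such that the trajectory starting at x_0 = 0 with x_{k+1} = A x_k + B u_k passes exactly through x_1,...,x_d and then x_{d+1} = 0. -/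
open Matrix

variable {R : Type*} [CommRing R] {n m : ℕ}

open Polynomial

/-- The `k`-th coefficient vector of a polynomial vector. -/
def coeffVec (f : Fin n → R[X]) (k : ℕ) : Fin n → R := fun i => (f i).coeff k

/-- The `R`-submodule generated by the coefficient vectors of `f`. -/
def Uf (f : Fin n → R[X]) : Submodule R (Fin n → R) :=
  Submodule.span R (Set.range (coeffVec f))

/-- The kernel condition `(yE - A) f = B g`. -/
def kerCond (A : Matrix (Fin n) (Fin n) R) (B : Matrix (Fin n) (Fin m) R)
    (f : Fin n → R[X]) (g : Fin m → R[X]) : Prop :=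
  ((X : R[X]) • (1 : Matrix (Fin n) (Fin n) R[X]) - A.map C).mulVec f = (B.map C).mulVec g

/-- The module `𝓜 = ker[yE-A,-B] ∩ (M[y] × R[y]^m)`. -/
def scrM (A : Matrix (Fin n) (Fin n) R) (B : Matrix (Fin n) (Fin m) R)
    (M : Submodule R (Fin n → R)) : Set ((Fin n → R[X]) × (Fin m → R[X])) :=
  {p | kerCond A B p.1 p.2 ∧ ∀ k, coeffVec p.1 k ∈ M}

theorem stmt_9 (A : Matrix (Fin n) (Fin n) R) (B : Matrix (Fin n) (Fin m) R)
    (d : ℕ) (f : Fin n → R[X]) (g : Fin m → R[X])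
    (hdeg : ∀ i k, d ≤ k → (f i).coeff k = 0)
    (hker : kerCond A B f g) :
    ∃ (u : ℕ → Fin m → R) (xs : ℕ → Fin n → R),
      xs 0 = 0 ∧ (∀ k, xs (k + 1) = A.mulVec (xs k) + B.mulVec (u k)) ∧
      (∀ j, 1 ≤ j → j ≤ d → xs j = coeffVec f (d - j)) ∧
      xs (d + 1) = 0 := by
  have h : ∀ k i, ((((X : R[X]) • (1 : Matrix (Fin n) (Fin n) R[X]) - A.map C).mulVec f) i).coeff k
      = (((B.map C).mulVec g) i).coeff k := by
    intro k i; rw [hker]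
  have key : ∀ k, coeffVec f k = A.mulVec (coeffVec f (k+1)) + B.mulVec (coeffVec g (k+1)) := by
    intro k
    funext i
    have := h (k+1) i
    simp [Matrix.mulVec, dotProduct, Matrix.sub_apply, Matrix.smul_apply,
      Matrix.one_apply, sub_mul, Finset.sum_sub_distrib, coeff_X_mul, coeffVec,
      apply_ite (· * f i), Finset.sum_ite_eq, finset_sum_coeff, coeff_C_mul] at this ⊢
    linear_combination this
  have key0 : A.mulVec (coeffVec f 0) + B.mulVec (coeffVec g 0) = 0 := by
    funext i
    have := h 0 i
    simp [Matrix.mulVec, dotProduct, Matrix.sub_apply, Matrix.smul_apply,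
      Matrix.one_apply, sub_mul, Finset.sum_sub_distrib, coeffVec,
      apply_ite (· * f i), Finset.sum_ite_eq, finset_sum_coeff, coeff_C_mul,
      coeff_X_mul_zero] at this ⊢
    linear_combination -this
  refine ⟨fun k => if k ≤ d then coeffVec g (d - k) else 0,
    fun k => if k ≤ d then coeffVec f (d - k) else 0, ?_, ?_, ?_, ?_⟩
  · simp only [Nat.zero_le, if_true, Nat.sub_zero]
    funext i
    exact hdeg i d le_rfl
  · intro k
    rcases lt_trichotomy k d with hk | hk | hk
    · have h1 : k + 1 ≤ d := hk
      have h2 : k ≤ d := le_of_lt hk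
      simp only [h1, h2, if_true]
      have : d - k = (d - (k+1)) + 1 := by omega
      rw [this, key]
    · subst hk
      simp only [le_refl, if_true, Nat.lt_irrefl, Nat.sub_self,
        Nat.not_succ_le_self, if_false]
      exact key0.symm
    · have h1 : ¬ (k + 1 ≤ d) := by omega
      have h2 : ¬ (k ≤ d) := by omega
      simp [h1, h2]
  · intro j h1 h2
    simp [h2]
  · simp [Nat.not_succ_le_self]
end

section
/- For every element h of the module 𝓜 = ker[yE-A, -B] ∩ (M[y] × R[y]^m), the submodule U_{π(h)} of R^n generated by the coefficient vectors of the first-component polynomial vector π(h) is a reachability submodule contained in M. -/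
open Matrix

variable {R : Type*} [CommRing R] {n m : ℕ}

open Polynomial

lemma mapC_mulVec_coeff {m' : ℕ} (A : Matrix (Fin n) (Fin m') R) (f : Fin m' → R[X]) (i : Fin n) (s : ℕ) :
    ((A.map C).mulVec f i).coeff s = A.mulVec (coeffVec f s) i := by
  simp [Matrix.mulVec, dotProduct, Polynomial.finset_sum_coeff, Polynomial.coeff_C_mul,
    coeffVec]

lemma coeff_rec {A : Matrix (Fin n) (Fin n) R} {B : Matrix (Fin n) (Fin m) R}
    {f : Fin n → R[X]} {g : Fin m → R[X]} (h : kerCond A B f g) (k : ℕ) :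
    coeffVec f k = A.mulVec (coeffVec f (k+1)) + B.mulVec (coeffVec g (k+1)) := by
  funext i
  have h1 := congrArg (fun v => ((v i).coeff (k+1) : R)) h
  simp only [Matrix.sub_mulVec, Matrix.smul_mulVec, Matrix.one_mulVec] at h1
  simp only [Pi.sub_apply, Pi.smul_apply, smul_eq_mul, Polynomial.coeff_sub,
    Polynomial.coeff_X_mul, mapC_mulVec_coeff] at h1
  have : (f i).coeff k - A.mulVec (coeffVec f (k+1)) i = B.mulVec (coeffVec g (k+1)) i := h1
  simpa [coeffVec, Pi.add_apply, sub_eq_iff_eq_add'] using this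

lemma coeff_base {A : Matrix (Fin n) (Fin n) R} {B : Matrix (Fin n) (Fin m) R}
    {f : Fin n → R[X]} {g : Fin m → R[X]} (h : kerCond A B f g) :
    A.mulVec (coeffVec f 0) = -(B.mulVec (coeffVec g 0)) := by
  funext i
  have h1 := congrArg (fun v => ((v i).coeff 0 : R)) h
  simp only [Matrix.sub_mulVec, Matrix.smul_mulVec, Matrix.one_mulVec] at h1
  simp only [Pi.sub_apply, Pi.smul_apply, smul_eq_mul, Polynomial.coeff_sub,
    mapC_mulVec_coeff, Polynomial.coeff_X_mul_zero] at h1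
  have : (0:R) - A.mulVec (coeffVec f 0) i = B.mulVec (coeffVec g 0) i := h1
  simp only [Pi.neg_apply]
  linear_combination -this

lemma reached_gen {A : Matrix (Fin n) (Fin n) R} {B : Matrix (Fin n) (Fin m) R}
    {f : Fin n → R[X]} {g : Fin m → R[X]} (h : kerCond A B f g)
    (N : ℕ) (hN : ∀ j, N ≤ j → coeffVec f j = 0) (k : ℕ) :
    ABReached A B (Uf f) (coeffVec f k) N := by
  obtain ⟨d, hd⟩ : ∃ d, d = k + N := ⟨_, rfl⟩
  -- trajectory defined by recursion
  let u : ℕ → Fin m → R := fun j => coeffVec g (d - j)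
  let xs : ℕ → Fin n → R := fun j => Nat.rec (0 : Fin n → R)
    (fun j x => A.mulVec x + B.mulVec (u j)) j
  have hrec : ∀ j, xs (j + 1) = A.mulVec (xs j) + B.mulVec (u j) := fun j => rfl
  have key : ∀ j, j ≤ N → xs j = coeffVec f (d - j) := by
    intro j hj
    induction j with
    | zero => simpa [xs] using (hN d (by omega)).symm

    | succ j ih =>
      have hj' : j ≤ N := by omega
      have : d - j = (d - (j+1)) + 1 := by omega
      rw [hrec, ih hj']
      rw [show u j = coeffVec g ((d - (j+1)) + 1) by simp only [u, this]]
      rw [show coeffVec f (d - j) = coeffVec f ((d - (j+1)) + 1) by rw [this]]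
      exact (coeff_rec h (d - (j+1))).symm
  refine ⟨u, xs, rfl, hrec, ?_, ?_⟩
  · intro j h1 hjN
    rw [key j hjN]
    exact Submodule.subset_span ⟨d - j, rfl⟩
  · rw [key N le_rfl, show d - N = k from by omega]

theorem stmt_11 (A : Matrix (Fin n) (Fin n) R) (B : Matrix (Fin n) (Fin m) R)
    (M : Submodule R (Fin n → R))
    (p : (Fin n → R[X]) × (Fin m → R[X])) (hp : p ∈ scrM A B M) :
    ABReachability A B (Uf p.1) ∧ Uf p.1 ≤ M := by
  obtain ⟨hker, hM⟩ := hp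
  set f := p.1
  set g := p.2
  refine ⟨⟨?_, ?_⟩, ?_⟩
  · -- invariance
    intro x hx
    refine Submodule.span_induction (p := fun x _ => A.mulVec x ∈ Uf f ⊔ LinearMap.range B.mulVecLin)
      ?_ ?_ ?_ ?_ hx
    · rintro _ ⟨k, rfl⟩
      cases k with
      | zero =>
        refine Submodule.mem_sup_right ⟨-(coeffVec g 0), ?_⟩
        simp [coeff_base hker, Matrix.mulVec_neg]
      | succ k =>
        have := coeff_rec hker k
        have hAx : A.mulVec (coeffVec f (k+1)) = coeffVec f k - B.mulVec (coeffVec g (k+1)) := by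
          rw [this]; exact (add_sub_cancel_right _ _).symm
        rw [hAx, sub_eq_add_neg]
        exact Submodule.add_mem _
          (Submodule.mem_sup_left (Submodule.subset_span ⟨k, rfl⟩))
          (Submodule.mem_sup_right ⟨-(coeffVec g (k+1)), by simp [Matrix.mulVec_neg]⟩)
    · simp
    · intro a b _ _ ha hb
      rw [Matrix.mulVec_add]
      exact Submodule.add_mem _ ha hb
    · intro c a _ ha
      rw [Matrix.mulVec_smul]
      exact Submodule.smul_mem _ _ ha
  · -- reachability
    intro x hx
    obtain ⟨N, hNdef⟩ : ∃ N, N = (Finset.univ.sup fun i => (f i).natDegree) + 1 := ⟨_, rfl⟩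
    have hN : ∀ j, N ≤ j → coeffVec f j = 0 := by
      intro j hj
      funext i
      exact Polynomial.coeff_eq_zero_of_natDegree_lt
        (lt_of_lt_of_le (by
          have h2 : (f i).natDegree ≤ Finset.univ.sup fun i => (f i).natDegree :=
            Finset.le_sup (f := fun i => (f i).natDegree) (Finset.mem_univ i)
          omega) hj)
    refine ⟨N, ?_⟩
    refine Submodule.span_induction (p := fun x _ => ABReached A B (Uf f) x N) ?_ ?_ ?_ ?_ hx
    · rintro _ ⟨k, rfl⟩
      exact reached_gen hker N hN k
    · exact ⟨fun _ => 0, fun _ => 0, rfl, fun k => by simp, fun _ _ _ => Submodule.zero_mem _, rfl⟩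
    · rintro a b _ _ ⟨u1, xs1, h01, hr1, hU1, he1⟩ ⟨u2, xs2, h02, hr2, hU2, he2⟩
      refine ⟨u1 + u2, xs1 + xs2, by simp [h01, h02], ?_, ?_, by simp [he1, he2]⟩
      · intro k
        simp [hr1 k, hr2 k, Matrix.mulVec_add]
        abel
      · intro k h1 h2
        exact Submodule.add_mem _ (hU1 k h1 h2) (hU2 k h1 h2)
    · rintro c a _ ⟨u1, xs1, h01, hr1, hU1, he1⟩
      refine ⟨fun j => c • u1 j, fun j => c • xs1 j, by simp [h01], ?_, ?_, by simp [he1]⟩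
      · intro k
        simp [hr1 k, Matrix.mulVec_smul, Matrix.mulVec_add, smul_add]
      · intro k h1 h2
        exact Submodule.smul_mem _ _ (hU1 k h1 h2)
  · exact Submodule.span_le.2 (by rintro _ ⟨k, rfl⟩; exact hM k)
end

section
/- If R is Noetherian, then for every reachability submodule U of M there exists h ∈ 𝓜 = ker[yE-A,-B] ∩ (M[y] × R[y]^m) such that U = U_{π(h)}, the submodule generated by the coefficient vectors of the first component of h. -/
open Matrix

variable {R : Type*} [CommRing R] {n m : ℕ}

open Polynomial

/-!
A trajectory `x₀ = 0`, `x_{k+1} = A x_k + B u_k` is encoded backwards by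
`P_k = ∑_{j<k} x_j y^(k-1-j)` and `Q_k = ∑_{j<k} u_j y^(k-1-j)`, which satisfy
`(yE - A) P_k = B Q_k - x_k`. Since `R^n` is Noetherian, the spans of `x_0, …, x_{N-1}` stabilise,
so `x_N = ∑_{k<N} c_k x_k` for some `N` past any given time; then `P_N - ∑ c_k P_k` lies in the
kernel, and its coefficient vectors differ from `x_0, …, x_{N-1}` by combinations of earlier
states, so they span all of them. Two kernel elements `f`, `f'` are concatenated as `f + y^N f'`
with `N` beyond the degree of `f`, which joins their coefficient submodules. Hence a maximal
`U_f` inside a reachability submodule `U` contains every reachable state, i.e. equals `U`.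
-/

section Span

variable {S M : Type*} [Ring S] [AddCommGroup M] [Module S M]

theorem Submodule.mem_of_sub_mem_span_image_Iio {v w : ℕ → M} {P : Submodule S M} {N : ℕ}
    (hvw : ∀ j < N, v j - w j ∈ Submodule.span S (v '' Set.Iio j)) (hw : ∀ j < N, w j ∈ P) :
    ∀ j < N, v j ∈ P := by
  intro j
  induction j using Nat.strong_induction_on with
  | _ j ih =>
    intro hj
    have hspan : Submodule.span S (v '' Set.Iio j) ≤ P :=
      Submodule.span_le.2 <| Set.image_subset_iff.2 fun i hi => ih i hi (hi.trans hj)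
    simpa using P.add_mem (hspan (hvw j hj)) (hw j hj)

theorem IsNoetherian.exists_lt_mem_span_image_range [IsNoetherian S M] (v : ℕ → M) (r : ℕ) :
    ∃ N, r < N ∧ v N ∈ Submodule.span S (v '' ↑(Finset.range N)) := by
  let chain : ℕ →o Submodule S M :=
    ⟨fun N => Submodule.span S (v '' ↑(Finset.range N)), fun a b hab =>
      Submodule.span_mono <| Set.image_mono <| by simpa using hab⟩
  obtain ⟨N₀, hN₀⟩ := monotone_stabilizes_iff_noetherian.2 inferInstance chain
  set N := max N₀ (r + 1)
  refine ⟨N, by omega, ?_⟩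
  have hstable : chain (N + 1) = chain N := by
    rw [← hN₀ N (by omega), ← hN₀ (N + 1) (by omega)]
  change v N ∈ chain N
  rw [← hstable]
  exact Submodule.subset_span ⟨N, by simp, rfl⟩

end Span

def IsTrajectory (A : Matrix (Fin n) (Fin n) R) (B : Matrix (Fin n) (Fin m) R)
    (xs : ℕ → Fin n → R) (u : ℕ → Fin m → R) : Prop :=
  ∀ k, xs (k + 1) = A *ᵥ xs k + B *ᵥ u k

section Trajectories

variable {A : Matrix (Fin n) (Fin n) R} {B : Matrix (Fin n) (Fin m) R}
  {U : Submodule R (Fin n → R)}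

theorem IsTrajectory.splice {xs ys : ℕ → Fin n → R} {u v : ℕ → Fin m → R} {r : ℕ}
    (hx : IsTrajectory A B xs u) (hy : IsTrajectory A B ys v) (hxy : xs r = ys 0) :
    IsTrajectory A B (fun k => if k ≤ r then xs k else ys (k - r))
      (fun k => if k < r then u k else v (k - r)) := by
  intro k
  by_cases hk : k < r
  · simp only [if_pos (show k + 1 ≤ r by omega), if_pos hk.le, if_pos hk, hx k]
  · have hjoin : (if k ≤ r then xs k else ys (k - r)) = ys (k - r) := by
      split_ifs with h
      · rw [show k = r by omega, hxy, Nat.sub_self]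
      · rfl
    simp only [if_neg (show ¬k + 1 ≤ r by omega), if_neg hk, hjoin,
      show k + 1 - r = k - r + 1 by omega, hy (k - r)]

theorem ABInvariant.exists_isTrajectory (hU : ABInvariant A B U) {x : Fin n → R} (hx : x ∈ U) :
    ∃ xs u, IsTrajectory A B xs u ∧ xs 0 = x ∧ ∀ k, xs k ∈ U := by
  have hstep : ∀ y : U, ∃ w, A *ᵥ y + B *ᵥ w ∈ U := by
    rintro ⟨y, hy⟩
    obtain ⟨z, hz, _, ⟨w, rfl⟩, hzw⟩ := Submodule.mem_sup.1 (hU y hy)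
    refine ⟨-w, ?_⟩
    rwa [Matrix.mulVec_neg, ← hzw, Matrix.mulVecLin_apply, add_neg_cancel_right]
  choose w hw using hstep
  let next : U → U := fun y => ⟨A *ᵥ y + B *ᵥ w y, hw y⟩
  refine ⟨fun k => next^[k] ⟨x, hx⟩, fun k => w (next^[k] ⟨x, hx⟩), fun k => ?_, rfl,
    fun k => (next^[k] ⟨x, hx⟩).2⟩
  simp only [Function.iterate_succ_apply']
  rfl

theorem ABReachability.exists_isTrajectory (hU : ABReachability A B U) {x : Fin n → R}
    (hx : x ∈ U) : ∃ xs u r, IsTrajectory A B xs u ∧ xs 0 = 0 ∧ (∀ k, xs k ∈ U) ∧ xs r = x := by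
  obtain ⟨r, u₀, xs₀, hxs₀, htraj₀, hmem₀, hr⟩ := hU.2 x hx
  obtain ⟨ys, v, htraj, hys₀, hmem⟩ := hU.1.exists_isTrajectory hx
  refine ⟨_, _, r, IsTrajectory.splice htraj₀ htraj (hr.trans hys₀.symm),
    by simp [hxs₀], fun k => ?_, by simp [hr]⟩
  split_ifs with hk
  · rcases Nat.eq_zero_or_pos k with rfl | hpos
    · rw [hxs₀]; exact U.zero_mem
    · exact hmem₀ k hpos hk
  · exact hmem _

end Trajectories

section PolyVec

variable {p : ℕ}

theorem coeffVec_add (f g : Fin p → R[X]) (k : ℕ) :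
    coeffVec (f + g) k = coeffVec f k + coeffVec g k := by
  ext i; simp [coeffVec]

theorem coeffVec_X_pow_smul (f : Fin p → R[X]) (N k : ℕ) :
    coeffVec ((X : R[X]) ^ N • f) k = if N ≤ k then coeffVec f (k - N) else 0 := by
  ext i
  simp only [coeffVec, Pi.smul_apply, smul_eq_mul, coeff_X_pow_mul']
  split_ifs <;> rfl

theorem Uf_le_iff {f : Fin p → R[X]} {P : Submodule R (Fin p → R)} :
    Uf f ≤ P ↔ ∀ k, coeffVec f k ∈ P :=
  Submodule.span_le.trans Set.range_subset_iff

theorem coeffVec_mem_Uf (f : Fin p → R[X]) (k : ℕ) : coeffVec f k ∈ Uf f :=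
  Submodule.subset_span ⟨k, rfl⟩

theorem Uf_add_X_pow_smul {f : Fin p → R[X]} {N : ℕ} (hf : ∀ k, N ≤ k → coeffVec f k = 0)
    (g : Fin p → R[X]) : Uf (f + (X : R[X]) ^ N • g) = Uf f ⊔ Uf g := by
  apply le_antisymm
  · refine Uf_le_iff.2 fun k => ?_
    rw [coeffVec_add, coeffVec_X_pow_smul]
    split_ifs
    · exact Submodule.add_mem_sup (coeffVec_mem_Uf f k) (coeffVec_mem_Uf g _)
    · simpa using Submodule.mem_sup_left (coeffVec_mem_Uf f k)
  · refine sup_le (Uf_le_iff.2 fun k => ?_) (Uf_le_iff.2 fun k => ?_)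
    · by_cases hk : N ≤ k
      · simp [hf k hk]
      · simpa [coeffVec_add, coeffVec_X_pow_smul, hk] using
          coeffVec_mem_Uf (f + (X : R[X]) ^ N • g) k
    · have := coeffVec_mem_Uf (f + (X : R[X]) ^ N • g) (k + N)
      rwa [coeffVec_add, coeffVec_X_pow_smul, hf _ (by omega), zero_add, if_pos (by omega),
        Nat.add_sub_cancel] at this

theorem exists_coeffVec_eq_zero (f : Fin p → R[X]) : ∃ N, ∀ k, N ≤ k → coeffVec f k = 0 :=
  ⟨Finset.univ.sup fun i => (f i).natDegree + 1, fun _ hk => funext fun i =>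
    coeff_eq_zero_of_natDegree_lt <|
      Nat.lt_of_succ_le <| (Finset.le_sup (f := fun i => (f i).natDegree + 1)
        (Finset.mem_univ i)).trans hk⟩

end PolyVec

section Kernel

variable {A : Matrix (Fin n) (Fin n) R} {B : Matrix (Fin n) (Fin m) R}

theorem scrM_mono {M M' : Submodule R (Fin n → R)} (h : M ≤ M') : scrM A B M ⊆ scrM A B M' :=
  fun _ hp => ⟨hp.1, fun k => h (hp.2 k)⟩

theorem add_X_pow_smul_mem_scrM {M : Submodule R (Fin n → R)} {p q} (hp : p ∈ scrM A B M)
    (hq : q ∈ scrM A B M) (N : ℕ) :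
    (p.1 + (X : R[X]) ^ N • q.1, p.2 + (X : R[X]) ^ N • q.2) ∈ scrM A B M := by
  refine ⟨?_, fun k => ?_⟩
  · rw [kerCond, Matrix.mulVec_add, Matrix.mulVec_add, Matrix.mulVec_smul, Matrix.mulVec_smul,
      hp.1, hq.1]
  · rw [coeffVec_add, coeffVec_X_pow_smul]
    split_ifs
    · exact M.add_mem (hp.2 k) (hq.2 _)
    · simpa using hp.2 k

theorem exists_mem_scrM_Uf_eq_sup {M : Submodule R (Fin n → R)} {q q'} (hq : q ∈ scrM A B M)
    (hq' : q' ∈ scrM A B M) : ∃ q'' ∈ scrM A B M, Uf q''.1 = Uf q.1 ⊔ Uf q'.1 := by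
  obtain ⟨N, hN⟩ := exists_coeffVec_eq_zero q.1
  exact ⟨_, add_X_pow_smul_mem_scrM hq hq' N, Uf_add_X_pow_smul hN q'.1⟩

theorem zero_mem_scrM (M : Submodule R (Fin n → R)) :
    (0 : (Fin n → R[X]) × (Fin m → R[X])) ∈ scrM A B M :=
  ⟨by simp [kerCond], fun _ => by convert M.zero_mem; ext; simp [coeffVec]⟩

end Kernel

section TrajPoly

variable {p : ℕ}

noncomputable def trajPoly (v : ℕ → Fin p → R) : ℕ → Fin p → R[X]
  | 0 => 0
  | k + 1 => (X : R[X]) • trajPoly v k + C ∘ v k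

theorem coeffVec_trajPoly (v : ℕ → Fin p → R) (k i : ℕ) :
    coeffVec (trajPoly v k) i = if i < k then v (k - 1 - i) else 0 := by
  induction k generalizing i with
  | zero => ext; simp [trajPoly, coeffVec]
  | succ k ih =>
    ext j
    cases i with
    | zero => simp [trajPoly, coeffVec]
    | succ i =>
      have := congrFun (ih i) j
      simp only [coeffVec] at this
      simp [trajPoly, coeffVec, coeff_X_mul, this, show k - (i + 1) = k - 1 - i by omega]

variable {A : Matrix (Fin n) (Fin n) R} {B : Matrix (Fin n) (Fin m) R}

theorem mulVec_trajPoly {xs : ℕ → Fin n → R} {u : ℕ → Fin m → R} (hxs₀ : xs 0 = 0)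
    (hxs : IsTrajectory A B xs u) (k : ℕ) :
    ((X : R[X]) • (1 : Matrix (Fin n) (Fin n) R[X]) - A.map C) *ᵥ trajPoly xs k =
      B.map C *ᵥ trajPoly u k - C ∘ xs k := by
  induction k with
  | zero => simp [trajPoly, hxs₀]
  | succ k ih =>
    funext i
    simp only [trajPoly, Matrix.mulVec_add, Matrix.mulVec_smul, ih, hxs k]
    simp only [Matrix.sub_mulVec, Matrix.smul_mulVec, Matrix.one_mulVec, Pi.add_apply,
      Pi.smul_apply, Pi.sub_apply, Function.comp_apply, smul_eq_mul, X_mul_C,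
      ← RingHom.map_mulVec, map_add]
    ring


theorem IsTrajectory.exists_mem_scrM_mem_Uf [IsNoetherianRing R] {U : Submodule R (Fin n → R)}
    {xs : ℕ → Fin n → R} {u : ℕ → Fin m → R} (hxs : IsTrajectory A B xs u) (hxs₀ : xs 0 = 0)
    (hxsU : ∀ k, xs k ∈ U) (r : ℕ) :
    ∃ q ∈ scrM A B U, xs r ∈ Uf q.1 := by
  obtain ⟨N, hrN, hN⟩ := IsNoetherian.exists_lt_mem_span_image_range (S := R) xs r
  obtain ⟨c, hc⟩ := (Submodule.mem_span_image_finset_iff_exists_fun' R).1 hN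
  set f := trajPoly xs N - ∑ k ∈ Finset.range N, c k • trajPoly xs k
  set g := trajPoly u N - ∑ k ∈ Finset.range N, c k • trajPoly u k
  have hcoeff : ∀ i, coeffVec f i = (if i < N then xs (N - 1 - i) else 0) -
      ∑ k ∈ Finset.range N, c k • (if i < k then xs (k - 1 - i) else 0) := by
    intro i
    simp only [← coeffVec_trajPoly]
    ext j
    simp [f, coeffVec]
  refine ⟨(f, g), ⟨?_, fun i => ?_⟩, ?_⟩
  · have hC : C ∘ xs N = ∑ k ∈ Finset.range N, c k • C ∘ xs k := by
      rw [← hc]; funext j; simp [map_sum, Polynomial.smul_C]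
    simp only [kerCond, f, g, Matrix.mulVec_sub, Matrix.mulVec_sum, Matrix.mulVec_smul,
      mulVec_trajPoly hxs₀ hxs, hC]
    simp [smul_sub, Finset.sum_sub_distrib]
  · rw [hcoeff]
    refine U.sub_mem ?_ (U.sum_mem fun k _ => U.smul_mem _ ?_) <;> split_ifs
    all_goals first | exact hxsU _ | exact U.zero_mem
  · refine Submodule.mem_of_sub_mem_span_image_Iio (w := fun j => coeffVec f (N - 1 - j))
      (fun j hj => ?_) (fun j _ => coeffVec_mem_Uf f _) r hrN
    rw [hcoeff, if_pos (by omega), show N - 1 - (N - 1 - j) = j by omega, sub_sub_cancel]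
    refine Submodule.sum_mem _ fun k hk => Submodule.smul_mem _ _ ?_
    split_ifs
    · rw [Finset.mem_range] at hk
      exact Submodule.subset_span ⟨_, Set.mem_Iio.2 (by omega), rfl⟩
    · exact Submodule.zero_mem _

end TrajPoly

theorem ABReachability.exists_mem_scrM_eq_Uf [IsNoetherianRing R]
    {A : Matrix (Fin n) (Fin n) R} {B : Matrix (Fin n) (Fin m) R} {U : Submodule R (Fin n → R)}
    (hU : ABReachability A B U) : ∃ q ∈ scrM A B U, U = Uf q.1 := by
  obtain ⟨_, ⟨q, hq, rfl⟩, hmax⟩ := set_has_maximal_iff_noetherian.2 inferInstance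
    ((fun q => Uf q.1) '' scrM A B U) ⟨_, _, zero_mem_scrM U, rfl⟩
  refine ⟨q, hq, le_antisymm (fun x hx => ?_) (Uf_le_iff.2 hq.2)⟩
  obtain ⟨xs, u, r, htraj, hxs₀, hxsU, rfl⟩ := hU.exists_isTrajectory hx
  obtain ⟨q', hq', hr⟩ := htraj.exists_mem_scrM_mem_Uf hxs₀ hxsU r
  obtain ⟨q'', hq'', hsup⟩ := exists_mem_scrM_Uf_eq_sup hq hq'
  have hle : Uf q.1 ≤ Uf q''.1 := hsup ▸ le_sup_left
  rw [hle.eq_of_not_lt (hmax _ ⟨q'', hq'', rfl⟩), hsup]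
  exact Submodule.mem_sup_right hr

theorem stmt_12 [IsNoetherianRing R] (A : Matrix (Fin n) (Fin n) R)
    (B : Matrix (Fin n) (Fin m) R) (M : Submodule R (Fin n → R))
    (U : Submodule R (Fin n → R)) (hU : ABReachability A B U) (hUM : U ≤ M) :
    ∃ p ∈ scrM A B M, U = Uf p.1 := by
  obtain ⟨q, hq, hUq⟩ := hU.exists_mem_scrM_eq_Uf
  exact ⟨q, scrM_mono hUM hq, hUq⟩
end

section
/- Worked example over R = ℚ[t]: for A = [[0,1,0],[0,0,t],[0,0,0]], B = [[1,-t],[t,t],[0,t]], and M the image of [[-1,0],[1,0],[0,1]], the maximal reachability submodule of M is the rank-one module generated by (t,-t,-t), and it is strictly contained in the maximal (A,B)-invariant submodule of M, which is generated by (1,-1,-1). -/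
open Matrix

variable {R : Type*} [CommRing R] {n m : ℕ}

open Polynomial

namespace Stmt17Aux

noncomputable def Am : Matrix (Fin 3) (Fin 3) ℚ[X] := !![0, 1, 0; 0, 0, X; 0, 0, 0]
noncomputable def Bm : Matrix (Fin 3) (Fin 2) ℚ[X] := !![1, -X; X, X; 0, X]
noncomputable def Mm : Submodule ℚ[X] (Fin 3 → ℚ[X]) :=
  LinearMap.range (!![-1, 0; 1, 0; 0, 1] : Matrix (Fin 3) (Fin 2) ℚ[X]).mulVecLin

lemma Amv (x : Fin 3 → ℚ[X]) : Am.mulVec x = ![x 1, X * x 2, 0] := by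
  funext i; fin_cases i <;> simp [Am, mulVec, dotProduct, Fin.sum_univ_succ]

lemma Bmv (c : Fin 2 → ℚ[X]) : Bm.mulVec c = ![c 0 - X * c 1, X * c 0 + X * c 1, X * c 1] := by
  funext i; fin_cases i <;> simp [Bm, mulVec, dotProduct, Fin.sum_univ_succ] <;> ring

lemma memM_iff (x : Fin 3 → ℚ[X]) : x ∈ Mm ↔ x 0 + x 1 = 0 := by
  constructor
  · rintro ⟨c, rfl⟩
    simp [Matrix.mulVecLin_apply, mulVec, dotProduct, Fin.sum_univ_succ]
  · intro h
    refine ⟨![x 1, x 2], ?_⟩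
    funext i
    fin_cases i <;>
      simp [Matrix.mulVecLin_apply, mulVec, dotProduct, Fin.sum_univ_succ] <;>
      linear_combination -h

/-- Infinite descent: all powers of `X+1` divide `x 0 + x 2` for `x` in an invariant
submodule of `Mm`. -/
lemma dvd_lemma (U : Submodule ℚ[X] (Fin 3 → ℚ[X])) (hinv : ABInvariant Am Bm U)
    (hle : U ≤ Mm) : ∀ k : ℕ, ∀ x ∈ U, (X + 1) ^ k ∣ (x 0 + x 2) := by
  intro k
  induction k with
  | zero => intro x _; simp
  | succ k ih =>
    intro x hx
    have hxM : x 0 + x 1 = 0 := (memM_iff x).mp (hle hx)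
    obtain ⟨u, hu, w, hw, hsum⟩ := Submodule.mem_sup.mp (hinv x hx)
    obtain ⟨c, rfl⟩ := hw
    rw [Matrix.mulVecLin_apply, Bmv, Amv] at hsum
    have e0 := congrFun hsum 0
    have e1 := congrFun hsum 1
    have e2 := congrFun hsum 2
    simp only [Pi.add_apply, Matrix.cons_val_zero, Matrix.cons_val_one, Matrix.head_cons,
      Matrix.cons_val_two, Matrix.tail_cons] at e0 e1 e2
    have huM : u 0 + u 1 = 0 := (memM_iff u).mp (hle hu)
    have key : (X + 1) * (u 0 + u 2) = -(X * (x 0 + x 2)) := by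
      linear_combination (X : ℚ[X]) * e0 - e1 + (X + 1) * e2 + huM + X * hxM
    have hdvd : (X + 1) ^ (k + 1) ∣ X * (x 0 + x 2) := by
      have hk : (X + 1) ^ k ∣ (u 0 + u 2) := ih u hu
      have : (X + 1) ^ (k + 1) ∣ (X + 1) * (u 0 + u 2) := by
        rw [pow_succ, mul_comm ((X:ℚ[X]) + 1)]
        exact mul_dvd_mul_right hk _
      rw [key] at this
      exact (dvd_neg.mp this)
    have hcop : IsCoprime ((X + 1 : ℚ[X]) ^ (k + 1)) X :=
      (IsCoprime.pow_left ⟨1, -1, by ring⟩)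
    exact hcop.dvd_of_dvd_mul_left hdvd

lemma forall_dvd_eq_zero (p : ℚ[X]) (h : ∀ k : ℕ, (X + 1) ^ k ∣ p) : p = 0 := by
  by_contra hp
  have hd := Polynomial.natDegree_le_of_dvd (h (p.natDegree + 1)) hp
  rw [Polynomial.natDegree_pow] at hd
  have h1 : (X + 1 : ℚ[X]).natDegree = 1 := by compute_degree!
  rw [h1] at hd
  omega

/-- Any invariant submodule of `Mm` is contained in `span {(1,-1,-1)}`. -/
lemma inv_le_span (U : Submodule ℚ[X] (Fin 3 → ℚ[X])) (hinv : ABInvariant Am Bm U)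
    (hle : U ≤ Mm) : U ≤ Submodule.span ℚ[X] {![1, -1, -1]} := by
  intro x hx
  have h02 : x 0 + x 2 = 0 := forall_dvd_eq_zero _ (fun k => dvd_lemma U hinv hle k x hx)
  have h01 : x 0 + x 1 = 0 := (memM_iff x).mp (hle hx)
  rw [Submodule.mem_span_singleton]
  refine ⟨x 0, ?_⟩
  funext i
  fin_cases i <;> simp <;>
    first
    | rfl
    | linear_combination h01 - h02
    | linear_combination -h01
    | linear_combination -h02
    | linear_combination h01
    | linear_combination h02

lemma span_v_le_M : Submodule.span ℚ[X] {![1, -1, -1]} ≤ Mm := by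
  rw [Submodule.span_le, Set.singleton_subset_iff]
  rw [SetLike.mem_coe, memM_iff]
  simp

lemma span_tv_le_M : Submodule.span ℚ[X] {![X, -X, -X]} ≤ Mm := by
  rw [Submodule.span_le, Set.singleton_subset_iff]
  rw [SetLike.mem_coe, memM_iff]
  simp

lemma inv_span_v : ABInvariant Am Bm (Submodule.span ℚ[X] {![1, -1, -1]}) := by
  intro x hx
  obtain ⟨a, rfl⟩ := Submodule.mem_span_singleton.mp hx
  refine Submodule.mem_sup_right ⟨![-a, 0], ?_⟩
  rw [Matrix.mulVecLin_apply, Bmv, Amv]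
  funext i
  fin_cases i <;> simp <;> ring

/-- Candidate trajectory built from an input sequence. -/
noncomputable def traj (u : ℕ → Fin 2 → ℚ[X]) : ℕ → Fin 3 → ℚ[X]
  | 0 => 0
  | k + 1 => Am.mulVec (traj u k) + Bm.mulVec (u k)

lemma reachability_span_tv : ABReachability Am Bm (Submodule.span ℚ[X] {![X, -X, -X]}) := by
  constructor
  · intro x hx
    obtain ⟨a, rfl⟩ := Submodule.mem_span_singleton.mp hx
    refine Submodule.mem_sup_right ⟨![-(a * X), 0], ?_⟩
    rw [Matrix.mulVecLin_apply, Bmv, Amv]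
    funext i
    fin_cases i <;> simp <;> ring
  · intro x hx
    obtain ⟨a, rfl⟩ := Submodule.mem_span_singleton.mp hx
    set u : ℕ → Fin 2 → ℚ[X] := fun k => if k = 0 then ![0, -a] else 0 with hu
    have h1 : traj u 1 = a • ![X, -X, -X] := by
      show Am.mulVec (traj u 0) + Bm.mulVec (u 0) = _
      show Am.mulVec 0 + Bm.mulVec ![0, -a] = _
      rw [Matrix.mulVec_zero, Bmv]
      funext i
      fin_cases i <;> simp <;> ring
    refine ⟨1, u, traj u, rfl, fun k => rfl, ?_, h1⟩
    intro k hk1 hk2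
    have : k = 1 := by omega
    subst this
    rw [h1]
    exact Submodule.smul_mem _ a (Submodule.mem_span_singleton_self _)

lemma reach_le_span_tv (U : Submodule ℚ[X] (Fin 3 → ℚ[X])) (hr : ABReachability Am Bm U)
    (hle : U ≤ Mm) : U ≤ Submodule.span ℚ[X] {![X, -X, -X]} := by
  have hV : U ≤ Submodule.span ℚ[X] {![1, -1, -1]} := inv_le_span U hr.1 hle
  intro x hx
  obtain ⟨r, u, xs, h0, hrec, hmem, hxr⟩ := hr.2 x hx
  match r, hxr with
  | 0, hxr =>
    rw [← hxr, h0]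
    exact Submodule.zero_mem _
  | (s + 1), hxr =>
    have hprev : xs s ∈ Submodule.span ℚ[X] {![1, -1, -1]} := by
      cases s with
      | zero => rw [h0]; exact Submodule.zero_mem _
      | succ t => exact hV (hmem (t + 1) (by omega) (by omega))
    obtain ⟨a, ha⟩ := Submodule.mem_span_singleton.mp hprev
    have hxB : x = Bm.mulVec (![-a, 0] + u s) := by
      rw [← hxr, hrec s, ← ha, Amv, Bmv, Bmv]
      funext i
      fin_cases i <;> simp <;> ring
    obtain ⟨b, hb⟩ := Submodule.mem_span_singleton.mp (hV hx)
    set c : Fin 2 → ℚ[X] := ![-a, 0] + u s with hc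
    have E : b • ![1, -1, -1] = ![c 0 - X * c 1, X * c 0 + X * c 1, X * c 1] := by
      rw [hb, ← Bmv, ← hxB]
    have e0 := congrFun E 0
    have e1 := congrFun E 1
    have e2 := congrFun E 2
    simp only [Pi.smul_apply, Matrix.cons_val_zero, Matrix.cons_val_one, Matrix.head_cons,
      Matrix.cons_val_two, Matrix.tail_cons, smul_eq_mul, mul_one, mul_neg_one] at e0 e1 e2
    have hc0 : (X + 1) * c 0 = 0 := by linear_combination -e0 - e1
    have hXne : (X + 1 : ℚ[X]) ≠ 0 := by
      intro h
      have := congrArg (Polynomial.eval 0) h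
      simp at this
    have hc00 : c 0 = 0 := (mul_eq_zero.mp hc0).resolve_left hXne
    have hb2 : b = -(X * c 1) := by linear_combination e0 + hc00
    rw [Submodule.mem_span_singleton]
    refine ⟨-c 1, ?_⟩
    rw [← hb]
    funext i
    fin_cases i <;> simp <;> first | linear_combination hb2 | linear_combination -hb2

end Stmt17Aux

theorem stmt_17 :
    let A : Matrix (Fin 3) (Fin 3) ℚ[X] := !![0, 1, 0; 0, 0, X; 0, 0, 0]
    let B : Matrix (Fin 3) (Fin 2) ℚ[X] := !![1, -X; X, X; 0, X]
    let M : Submodule ℚ[X] (Fin 3 → ℚ[X]) :=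
      LinearMap.range (!![-1, 0; 1, 0; 0, 1] : Matrix (Fin 3) (Fin 2) ℚ[X]).mulVecLin
    let M0 := sSup {U : Submodule ℚ[X] (Fin 3 → ℚ[X]) | ABReachability A B U ∧ U ≤ M}
    let Mstar := sSup {U : Submodule ℚ[X] (Fin 3 → ℚ[X]) | ABInvariant A B U ∧ U ≤ M}
    M0 = Submodule.span ℚ[X] {![X, -X, -X]} ∧
    Mstar = Submodule.span ℚ[X] {![1, -1, -1]} ∧
    M0 < Mstar := by
  intro A B M M0 Mstar
  have hM0 : M0 = Submodule.span ℚ[X] {![X, -X, -X]} := by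
    apply le_antisymm
    · exact sSup_le fun U hU => Stmt17Aux.reach_le_span_tv U hU.1 hU.2
    · exact le_sSup ⟨Stmt17Aux.reachability_span_tv, Stmt17Aux.span_tv_le_M⟩
  have hMs : Mstar = Submodule.span ℚ[X] {![1, -1, -1]} := by
    apply le_antisymm
    · exact sSup_le fun U hU => Stmt17Aux.inv_le_span U hU.1 hU.2
    · exact le_sSup ⟨Stmt17Aux.inv_span_v, Stmt17Aux.span_v_le_M⟩
  refine ⟨hM0, hMs, ?_⟩
  rw [hM0, hMs]
  apply lt_of_le_of_ne
  · rw [Submodule.span_le, Set.singleton_subset_iff, SetLike.mem_coe,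
      Submodule.mem_span_singleton]
    refine ⟨X, ?_⟩
    funext i
    fin_cases i <;> simp <;> ring
  · intro h
    have hv : (![1, -1, -1] : Fin 3 → ℚ[X]) ∈ Submodule.span ℚ[X] {![X, -X, -X]} := by
      rw [h]
      exact Submodule.mem_span_singleton_self _
    obtain ⟨a, ha⟩ := Submodule.mem_span_singleton.mp hv
    have h0 := congrFun ha 0
    simp only [Pi.smul_apply, Matrix.cons_val_zero, smul_eq_mul] at h0
    have := congrArg (Polynomial.eval 0) h0
    simp at this
end
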